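/- arXiv:0911.5725 — 4 statements merged into one kernel-verified Lean document; each statement's English description precedes it below -/
import Mathlib

section
/- Let V be a finite-dimensional real inner product space with symmetric positive definite bilinear form a, and let V₀,...,V_N be subspaces with V = Σᵢ Vᵢ. Let Pᵢ : V → Vᵢ denote the a-orthogonal projection onto Vᵢ, and let P = Σᵢ Pᵢ. If every v ∈ V admits a decomposition v = Σᵢ vᵢ with vᵢ ∈ Vᵢ and Σᵢ a(vᵢ,vᵢ) ≤ C₀ a(v,v), then a(P⁻¹ v, v) ≤ C₀ a(v,v) for all v; equivalently, the smallest eigenvalue of the additive Schwarz operator P with respect to the a-inner product is at least 1/C₀. -/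
theorem stmt1 {V : Type*} [AddCommGroup V] [Module ℝ V] [FiniteDimensional ℝ V]
    (a : V →ₗ[ℝ] V →ₗ[ℝ] ℝ)
    (hsymm : ∀ u v, a u v = a v u)
    (hpos : ∀ v : V, v ≠ 0 → 0 < a v v)
    (N : ℕ) (Vs : Fin (N + 1) → Submodule ℝ V)
    (hspan : (⨆ i, Vs i) = ⊤)
    (Pi : Fin (N + 1) → V →ₗ[ℝ] V)
    (hPi_mem : ∀ i v, Pi i v ∈ Vs i)
    (hPi_proj : ∀ i v, ∀ w ∈ Vs i, a (Pi i v) w = a v w)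
    (P : V →ₗ[ℝ] V) (hP : P = ∑ i, Pi i)
    (Pinv : V →ₗ[ℝ] V)
    (hinv₁ : Pinv ∘ₗ P = LinearMap.id) (hinv₂ : P ∘ₗ Pinv = LinearMap.id)
    (C₀ : ℝ)
    (hdec : ∀ v : V, ∃ vi : Fin (N + 1) → V, (∀ i, vi i ∈ Vs i) ∧ v = ∑ i, vi i ∧
      ∑ i, a (vi i) (vi i) ≤ C₀ * a v v) :
    ∀ v : V, a (Pinv v) v ≤ C₀ * a v v := by
  -- nonnegativity of the form
  have hnn : ∀ x : V, 0 ≤ a x x := by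
    intro x
    rcases eq_or_ne x 0 with rfl | h
    · simp
    · exact (hpos x h).le
  -- Cauchy-Schwarz for the form
  have hcs : ∀ x y : V, a x y ≤ Real.sqrt (a x x) * Real.sqrt (a y y) := by
    intro x y
    have hdisc : discrim (a y y) (2 * a x y) (a x x) ≤ 0 := by
      apply discrim_le_zero
      intro t
      have := hnn (x + t • y)
      have hexp : a (x + t • y) (x + t • y)
          = a y y * (t * t) + 2 * a x y * t + a x x := by
        simp [map_add, map_smul, hsymm y x]
        ring
      linarith [hexp ▸ this]
    rw [discrim] at hdisc
    have h1 : (a x y) ^ 2 ≤ a x x * a y y := by nlinarith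
    calc a x y ≤ |a x y| := le_abs_self _
      _ = Real.sqrt ((a x y) ^ 2) := (Real.sqrt_sq_eq_abs _).symm
      _ ≤ Real.sqrt (a x x * a y y) := Real.sqrt_le_sqrt h1
      _ = Real.sqrt (a x x) * Real.sqrt (a y y) := Real.sqrt_mul (hnn x) _
  intro v
  set u := Pinv v with hu
  have hPu : P u = v := by
    have := congrArg (fun f => f v) hinv₂
    simpa using this
  obtain ⟨vi, hmem, hsum, hbound⟩ := hdec v
  -- s = a u v = ∑ a (Pi i u) (Pi i u)
  have hs : a u v = ∑ i, a (Pi i u) (Pi i u) := by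
    conv_lhs => rw [← hPu, hP]
    simp only [LinearMap.sum_apply, map_sum]
    exact Finset.sum_congr rfl fun i _ => (hPi_proj i u (Pi i u) (hPi_mem i u)).symm
  have hs_nn : 0 ≤ a u v := hs ▸ Finset.sum_nonneg fun i _ => hnn _
  have ht_nn : 0 ≤ C₀ * a v v :=
    le_trans (Finset.sum_nonneg fun i _ => hnn _) hbound
  -- a u v = ∑ a (Pi i u) (vi i)
  have hs2 : a u v = ∑ i, a (Pi i u) (vi i) := by
    conv_lhs => rw [hsum]
    rw [map_sum]
    exact Finset.sum_congr rfl fun i _ => (hPi_proj i u (vi i) (hmem i)).symm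
  have key : a u v ≤ Real.sqrt (a u v) * Real.sqrt (C₀ * a v v) := by
    calc a u v = ∑ i, a (Pi i u) (vi i) := hs2
      _ ≤ ∑ i, Real.sqrt (a (Pi i u) (Pi i u)) * Real.sqrt (a (vi i) (vi i)) :=
          Finset.sum_le_sum fun i _ => hcs _ _
      _ ≤ Real.sqrt (∑ i, a (Pi i u) (Pi i u)) * Real.sqrt (∑ i, a (vi i) (vi i)) :=
          Real.sum_sqrt_mul_sqrt_le _ (fun i => hnn _) (fun i => hnn _)
      _ ≤ Real.sqrt (a u v) * Real.sqrt (C₀ * a v v) := by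
          rw [← hs]
          exact mul_le_mul_of_nonneg_left (Real.sqrt_le_sqrt hbound) (Real.sqrt_nonneg _)
  rcases eq_or_lt_of_le hs_nn with h0 | h0
  · rw [← h0]; exact ht_nn
  · have h1 : Real.sqrt (a u v) ≤ Real.sqrt (C₀ * a v v) := by
      have hsq : Real.sqrt (a u v) * Real.sqrt (a u v) = a u v :=
        Real.mul_self_sqrt hs_nn
      have hsp : 0 < Real.sqrt (a u v) := Real.sqrt_pos.mpr h0
      nlinarith [key]
    calc a u v ≤ Real.sqrt (a u v) * Real.sqrt (C₀ * a v v) := key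
      _ ≤ Real.sqrt (C₀ * a v v) * Real.sqrt (C₀ * a v v) :=
          mul_le_mul_of_nonneg_right h1 (Real.sqrt_nonneg _)
      _ = C₀ * a v v := Real.mul_self_sqrt ht_nn
end

section
/- Under the hypotheses of the additive Schwarz theory (stable decomposition constant C₀ and a coloring with n colors), the additive Schwarz operator P = Σᵢ Pᵢ is symmetric positive definite with respect to the a-inner product, and its spectral condition number κ(P) = λ_max(P)/λ_min(P) satisfies κ(P) ≤ n C₀. -/
/-!
The identity `a (P v) v = ∑ i, a (Pᵢ v) (Pᵢ v)` bounds the Rayleigh quotient of `P` from both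
sides. From below: for a stable splitting `v = ∑ vᵢ` we have `a v v = ∑ a (Pᵢ v) vᵢ`, and
Cauchy–Schwarz, first for `a` and then for the sum, gives `a v v ^ 2 ≤ a (P v) v * C₀ a v v`.
From above: the subspaces of one colour are mutually orthogonal, so by Bessel's inequality their
projections contribute at most `a v v` to the sum, and there are `n` colours.
Hence every eigenvalue of `P` lies in `[1 / C₀, n]`.
-/

section

open Finset

variable {V : Type*} [AddCommGroup V] [Module ℝ V] {a : V →ₗ[ℝ] V →ₗ[ℝ] ℝ}

theorem apply_self_nonneg (hpos : ∀ v : V, v ≠ 0 → 0 < a v v) (v : V) : 0 ≤ a v v := by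
  rcases eq_or_ne v 0 with rfl | hv
  · simp
  · exact (hpos v hv).le

structure IsOrthProj (a : V →ₗ[ℝ] V →ₗ[ℝ] ℝ) (W : Submodule ℝ V) (Q : V →ₗ[ℝ] V) : Prop where
  mem : ∀ v, Q v ∈ W
  apply_eq : ∀ v, ∀ w ∈ W, a (Q v) w = a v w

namespace IsOrthProj

variable {W : Submodule ℝ V} {Q : V →ₗ[ℝ] V}

theorem apply_self (hQ : IsOrthProj a W Q) (hsymm : ∀ u v, a u v = a v u) (v : V) :
    a (Q v) v = a (Q v) (Q v) := by
  rw [hQ.apply_eq v _ (hQ.mem v), hsymm]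

theorem apply_comm (hQ : IsOrthProj a W Q) (hsymm : ∀ u v, a u v = a v u) (u v : V) :
    a (Q u) v = a u (Q v) :=
  calc a (Q u) v = a v (Q u) := hsymm _ _
    _ = a (Q v) (Q u) := (hQ.apply_eq v _ (hQ.mem u)).symm
    _ = a (Q u) (Q v) := hsymm _ _
    _ = a u (Q v) := hQ.apply_eq u _ (hQ.mem v)

end IsOrthProj

section SumOfProjections

variable {ι : Type*} {W : ι → Submodule ℝ V} {Q : ι → V →ₗ[ℝ] V}

theorem sum_apply_proj_le_of_orthogonal (hQ : ∀ i, IsOrthProj a (W i) (Q i))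
    (hsymm : ∀ u v, a u v = a v u) (hnn : ∀ v, 0 ≤ a v v) (s : Finset ι)
    (horth : ∀ i ∈ s, ∀ j ∈ s, i ≠ j → ∀ u ∈ W i, ∀ w ∈ W j, a u w = 0) (v : V) :
    ∑ i ∈ s, a (Q i v) (Q i v) ≤ a v v := by
  set w := ∑ i ∈ s, Q i v
  have hww : a w w = ∑ i ∈ s, a (Q i v) (Q i v) := by
    simp only [w, map_sum, LinearMap.sum_apply]
    refine sum_congr rfl fun i hi => sum_eq_single_of_mem i hi fun j hj hji => ?_
    exact horth j hj i hi hji _ ((hQ j).mem v) _ ((hQ i).mem v)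
  have hwv : a w v = ∑ i ∈ s, a (Q i v) (Q i v) := by
    simp only [w, map_sum, LinearMap.sum_apply, (hQ _).apply_self hsymm]
  have h := hnn (v - w)
  simp only [map_sub, LinearMap.sub_apply] at h
  rw [hsymm v w, hww, hwv] at h
  linarith

variable [Fintype ι]

theorem apply_sum_proj_comm (hQ : ∀ i, IsOrthProj a (W i) (Q i))
    (hsymm : ∀ u v, a u v = a v u) (u v : V) :
    a ((∑ i, Q i) u) v = a u ((∑ i, Q i) v) := by
  simp only [LinearMap.sum_apply, map_sum, (hQ _).apply_comm hsymm]

theorem apply_sum_proj_self (hQ : ∀ i, IsOrthProj a (W i) (Q i))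
    (hsymm : ∀ u v, a u v = a v u) (v : V) :
    a ((∑ i, Q i) v) v = ∑ i, a (Q i v) (Q i v) := by
  simp only [LinearMap.sum_apply, map_sum, (hQ _).apply_self hsymm]

theorem sq_apply_self_le_sum_mul_sum (hQ : ∀ i, IsOrthProj a (W i) (Q i))
    (hsymm : ∀ u v, a u v = a v u) (hnn : ∀ v, 0 ≤ a v v) {v : V} {w : ι → V}
    (hw : ∀ i, w i ∈ W i) (hv : v = ∑ i, w i) :
    a v v ^ 2 ≤ (∑ i, a (Q i v) (Q i v)) * ∑ i, a (w i) (w i) := by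
  have cauchy_schwarz (x y : V) : a x y ^ 2 ≤ a x x * a y y := by
    simpa [sq, hsymm y x] using LinearMap.BilinForm.apply_mul_apply_le_of_forall_zero_le a hnn x y
  have hle : a v v ≤ √(∑ i, a (Q i v) (Q i v)) * √(∑ i, a (w i) (w i)) :=
    calc a v v = a v (∑ i, w i) := by rw [← hv]
      _ = ∑ i, a (Q i v) (w i) := by
        rw [map_sum]
        exact sum_congr rfl fun i _ => ((hQ i).apply_eq v _ (hw i)).symm
      _ ≤ ∑ i, √(a (Q i v) (Q i v)) * √(a (w i) (w i)) := sum_le_sum fun i _ => by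
        rw [← Real.sqrt_mul (hnn _)]
        exact Real.le_sqrt_of_sq_le (cauchy_schwarz _ _)
      _ ≤ _ := Real.sum_sqrt_mul_sqrt_le _ (fun _ => hnn _) (fun _ => hnn _)
  calc a v v ^ 2 ≤ (√(∑ i, a (Q i v) (Q i v)) * √(∑ i, a (w i) (w i))) ^ 2 :=
        pow_le_pow_left₀ (hnn v) hle 2
    _ = _ := by
      rw [mul_pow, Real.sq_sqrt (sum_nonneg fun _ _ => hnn _),
        Real.sq_sqrt (sum_nonneg fun _ _ => hnn _)]

theorem apply_self_le_mul_apply_sum_proj (hQ : ∀ i, IsOrthProj a (W i) (Q i))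
    (hsymm : ∀ u v, a u v = a v u) (hpos : ∀ v : V, v ≠ 0 → 0 < a v v) {C₀ : ℝ} {v : V}
    {w : ι → V} (hw : ∀ i, w i ∈ W i) (hv : v = ∑ i, w i)
    (hstable : ∑ i, a (w i) (w i) ≤ C₀ * a v v) :
    a v v ≤ C₀ * a ((∑ i, Q i) v) v := by
  rcases eq_or_ne v 0 with rfl | hv0
  · simp
  have hnn := apply_self_nonneg hpos
  have hcs := sq_apply_self_le_sum_mul_sum hQ hsymm hnn hw hv
  have hS : 0 ≤ ∑ i, a (Q i v) (Q i v) := sum_nonneg fun _ _ => hnn _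
  rw [apply_sum_proj_self hQ hsymm]
  nlinarith [mul_le_mul_of_nonneg_left hstable hS, hpos v hv0]

theorem sum_apply_proj_le_card_mul (hQ : ∀ i, IsOrthProj a (W i) (Q i))
    (hsymm : ∀ u v, a u v = a v u) (hnn : ∀ v, 0 ≤ a v v) {κ : Type*} [Fintype κ]
    (c : ι → κ) (hcolor : ∀ i j, i ≠ j → c i = c j → ∀ u ∈ W i, ∀ w ∈ W j, a u w = 0) (v : V) :
    ∑ i, a (Q i v) (Q i v) ≤ Fintype.card κ * a v v := by
  classical
  rw [← sum_fiberwise univ c]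
  calc _ ≤ ∑ _k : κ, a v v := sum_le_sum fun k _ =>
        sum_apply_proj_le_of_orthogonal hQ hsymm hnn _ (fun i hi j hj hij =>
          hcolor i j hij ((mem_filter.1 hi).2.trans (mem_filter.1 hj).2.symm)) v
    _ = _ := by simp

end SumOfProjections

theorem eigenvalue_div_le_of_rayleigh_bounds (hpos : ∀ v : V, v ≠ 0 → 0 < a v v) {T : V →ₗ[ℝ] V}
    (hT : ∀ v : V, v ≠ 0 → 0 < a (T v) v) {C M : ℝ} (hlow : ∀ v, a v v ≤ C * a (T v) v)
    (hup : ∀ v, a (T v) v ≤ M * a v v) {μ₁ μ₂ : ℝ} {v₁ v₂ : V} (hv₁ : v₁ ≠ 0) (hv₂ : v₂ ≠ 0)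
    (h₁ : T v₁ = μ₁ • v₁) (h₂ : T v₂ = μ₂ • v₂) :
    μ₁ / μ₂ ≤ M * C := by
  have rayleigh {μ : ℝ} {v : V} (h : T v = μ • v) : a (T v) v = μ * a v v := by
    rw [h, map_smul, LinearMap.smul_apply, smul_eq_mul]
  have hμ₁ : 0 < μ₁ := pos_of_mul_pos_left (rayleigh h₁ ▸ hT v₁ hv₁) (hpos v₁ hv₁).le
  have hμ₂ : 0 < μ₂ := pos_of_mul_pos_left (rayleigh h₂ ▸ hT v₂ hv₂) (hpos v₂ hv₂).le
  have hμ₁M : μ₁ ≤ M := le_of_mul_le_mul_right (rayleigh h₁ ▸ hup v₁) (hpos v₁ hv₁)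
  have hCμ₂ : 1 ≤ C * μ₂ := by
    have h := rayleigh h₂ ▸ hlow v₂
    rw [← mul_assoc] at h
    exact le_of_mul_le_mul_right (by linarith) (hpos v₂ hv₂)
  rw [div_le_iff₀ hμ₂]
  nlinarith

end

theorem stmt3_general {V : Type*} [AddCommGroup V] [Module ℝ V]
    (a : V →ₗ[ℝ] V →ₗ[ℝ] ℝ)
    (hsymm : ∀ u v, a u v = a v u)
    (hpos : ∀ v : V, v ≠ 0 → 0 < a v v)
    (N : ℕ) (Vs : Fin (N + 1) → Submodule ℝ V)
    (Pi : Fin (N + 1) → V →ₗ[ℝ] V)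
    (hPi_mem : ∀ i v, Pi i v ∈ Vs i)
    (hPi_proj : ∀ i v, ∀ w ∈ Vs i, a (Pi i v) w = a v w)
    (P : V →ₗ[ℝ] V) (hP : P = ∑ i, Pi i)
    (C₀ : ℝ)
    (hdec : ∀ v : V, ∃ vi : Fin (N + 1) → V, (∀ i, vi i ∈ Vs i) ∧ v = ∑ i, vi i ∧
      ∑ i, a (vi i) (vi i) ≤ C₀ * a v v)
    (n : ℕ) (c : Fin (N + 1) → Fin n)
    (hcolor : ∀ i j, i ≠ j → c i = c j →
      ∀ u ∈ Vs i, ∀ w ∈ Vs j, a u w = 0) :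
    -- P is symmetric w.r.t. the a-inner product
    (∀ u v : V, a (P u) v = a u (P v)) ∧
    -- P is positive definite w.r.t. the a-inner product
    (∀ v : V, v ≠ 0 → 0 < a (P v) v) ∧
    -- the ratio of any two eigenvalues of P is at most n * C₀,
    -- in particular κ(P) = λ_max / λ_min ≤ n C₀
    (∀ (μ₁ μ₂ : ℝ) (v₁ v₂ : V), v₁ ≠ 0 → v₂ ≠ 0 →
      P v₁ = μ₁ • v₁ → P v₂ = μ₂ • v₂ → μ₁ / μ₂ ≤ (n : ℝ) * C₀) := by
  subst hP
  have hQ (i : Fin (N + 1)) : IsOrthProj a (Vs i) (Pi i) := ⟨hPi_mem i, hPi_proj i⟩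
  have hnn := apply_self_nonneg hpos
  have hlow (v : V) : a v v ≤ C₀ * a ((∑ i, Pi i) v) v := by
    obtain ⟨w, hw, hv, hstable⟩ := hdec v
    exact apply_self_le_mul_apply_sum_proj hQ hsymm hpos hw hv hstable
  have hup (v : V) : a ((∑ i, Pi i) v) v ≤ n * a v v := by
    rw [apply_sum_proj_self hQ hsymm]
    simpa using sum_apply_proj_le_card_mul hQ hsymm hnn c hcolor v
  have hposdef (v : V) (hv : v ≠ 0) : 0 < a ((∑ i, Pi i) v) v := by
    have hPnn : 0 ≤ a ((∑ i, Pi i) v) v :=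
      apply_sum_proj_self hQ hsymm v ▸ Finset.sum_nonneg fun _ _ => hnn _
    refine hPnn.lt_of_ne fun h => ?_
    have := hlow v
    rw [← h, mul_zero] at this
    exact (hpos v hv).not_ge this
  exact ⟨apply_sum_proj_comm hQ hsymm, hposdef, fun μ₁ μ₂ v₁ v₂ hv₁ hv₂ h₁ h₂ =>
    eigenvalue_div_le_of_rayleigh_bounds hpos hposdef hlow hup hv₁ hv₂ h₁ h₂⟩

theorem stmt3 {V : Type*} [AddCommGroup V] [Module ℝ V] [FiniteDimensional ℝ V]
    (a : V →ₗ[ℝ] V →ₗ[ℝ] ℝ)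
    (hsymm : ∀ u v, a u v = a v u)
    (hpos : ∀ v : V, v ≠ 0 → 0 < a v v)
    (N : ℕ) (Vs : Fin (N + 1) → Submodule ℝ V)
    (hspan : (⨆ i, Vs i) = ⊤)
    (Pi : Fin (N + 1) → V →ₗ[ℝ] V)
    (hPi_mem : ∀ i v, Pi i v ∈ Vs i)
    (hPi_proj : ∀ i v, ∀ w ∈ Vs i, a (Pi i v) w = a v w)
    (P : V →ₗ[ℝ] V) (hP : P = ∑ i, Pi i)
    (C₀ : ℝ)
    (hdec : ∀ v : V, ∃ vi : Fin (N + 1) → V, (∀ i, vi i ∈ Vs i) ∧ v = ∑ i, vi i ∧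
      ∑ i, a (vi i) (vi i) ≤ C₀ * a v v)
    (n : ℕ) (c : Fin (N + 1) → Fin n)
    (hcolor : ∀ i j, i ≠ j → c i = c j →
      ∀ u ∈ Vs i, ∀ w ∈ Vs j, a u w = 0) :
    -- P is symmetric w.r.t. the a-inner product
    (∀ u v : V, a (P u) v = a u (P v)) ∧
    -- P is positive definite w.r.t. the a-inner product
    (∀ v : V, v ≠ 0 → 0 < a (P v) v) ∧
    -- the ratio of any two eigenvalues of P is at most n * C₀,
    -- in particular κ(P) = λ_max / λ_min ≤ n C₀
    (∀ (μ₁ μ₂ : ℝ) (v₁ v₂ : V), v₁ ≠ 0 → v₂ ≠ 0 →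
      P v₁ = μ₁ • v₁ → P v₂ = μ₂ • v₂ → μ₁ / μ₂ ≤ (n : ℝ) * C₀) :=
  stmt3_general a hsymm hpos N Vs Pi hPi_mem hPi_proj P hP C₀ hdec n c hcolor
end

section
/- Let V be a finite-dimensional real inner product space with symmetric positive definite form a and subspaces V₀,...,V_N with V = Σᵢ Vᵢ, and let P = Σᵢ Pᵢ be the additive Schwarz operator. For every v ∈ V, a(P⁻¹v, v) equals the minimum of Σᵢ a(vᵢ, vᵢ) over all decompositions v = Σᵢ vᵢ with vᵢ ∈ Vᵢ. -/
theorem stmt4 {V : Type*} [AddCommGroup V] [Module ℝ V] [FiniteDimensional ℝ V]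
    (a : V →ₗ[ℝ] V →ₗ[ℝ] ℝ)
    (hsymm : ∀ u v, a u v = a v u)
    (hpos : ∀ v : V, v ≠ 0 → 0 < a v v)
    (N : ℕ) (Vs : Fin (N + 1) → Submodule ℝ V)
    (hspan : (⨆ i, Vs i) = ⊤)
    (Pi : Fin (N + 1) → V →ₗ[ℝ] V)
    (hPi_mem : ∀ i v, Pi i v ∈ Vs i)
    (hPi_proj : ∀ i v, ∀ w ∈ Vs i, a (Pi i v) w = a v w)
    (P : V →ₗ[ℝ] V) (hP : P = ∑ i, Pi i)
    (Pinv : V →ₗ[ℝ] V)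
    (hinv₁ : Pinv ∘ₗ P = LinearMap.id) (hinv₂ : P ∘ₗ Pinv = LinearMap.id) :
    ∀ v : V, IsLeast
      {s : ℝ | ∃ vi : Fin (N + 1) → V, (∀ i, vi i ∈ Vs i) ∧ v = ∑ i, vi i ∧
        s = ∑ i, a (vi i) (vi i)}
      (a (Pinv v) v) := by
  -- basic facts about a
  have hnn : ∀ x : V, 0 ≤ a x x := by
    intro x
    by_cases hx : x = 0
    · simp [hx]
    · exact (hpos x hx).le
  have hcs_sq : ∀ x y : V, (a x y) ^ 2 ≤ a x x * a y y := by
    intro x y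
    by_cases hy : y = 0
    · simp [hy, hnn x]
    · have hα : 0 < a y y := hpos y hy
      have h := hnn ((a y y) • x - (a x y) • y)
      simp only [map_sub, map_smul, LinearMap.sub_apply, LinearMap.smul_apply,
        smul_eq_mul] at h
      rw [← hsymm x y] at h
      nlinarith [h, hα]
  have hcs : ∀ x y : V, a x y ≤ Real.sqrt (a x x) * Real.sqrt (a y y) := by
    intro x y
    have h1 : a x y ≤ |a x y| := le_abs_self _
    have h2 : |a x y| = Real.sqrt ((a x y) ^ 2) := by
      rw [Real.sqrt_sq_eq_abs]
    calc a x y ≤ Real.sqrt ((a x y) ^ 2) := by rw [← h2]; exact h1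
      _ ≤ Real.sqrt (a x x * a y y) := Real.sqrt_le_sqrt (hcs_sq x y)
      _ = Real.sqrt (a x x) * Real.sqrt (a y y) := Real.sqrt_mul (hnn x) _
  intro v
  set u := Pinv v with hu
  have hPu : P u = v := by
    have := congrArg (fun f : V →ₗ[ℝ] V => f v) hinv₂
    simpa using this
  have hsum : (∑ i, Pi i u) = v := by
    rw [← hPu, hP]; simp [LinearMap.sum_apply]
  -- key identity: a u v = ∑ a (Pi i u) (Pi i u)
  have hkey : a u v = ∑ i, a (Pi i u) (Pi i u) := by
    calc a u v = a u (∑ i, Pi i u) := by rw [hsum]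
      _ = ∑ i, a u (Pi i u) := by rw [map_sum]
      _ = ∑ i, a (Pi i u) (Pi i u) := by
          refine Finset.sum_congr rfl fun i _ => ?_
          rw [hPi_proj i u (Pi i u) (hPi_mem i u)]
  constructor
  · exact ⟨fun i => Pi i u, fun i => hPi_mem i u, hsum.symm, hkey⟩
  · rintro s ⟨wi, hwi_mem, hv, rfl⟩
    -- S = a u v ≥ 0, show S ≤ ∑ a (wi i) (wi i)
    have hSnn : 0 ≤ a u v := by
      rw [hkey]; exact Finset.sum_nonneg fun i _ => hnn _
    have hS : a u v = ∑ i, a (Pi i u) (wi i) := by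
      calc a u v = ∑ i, a u (wi i) := by rw [hv, map_sum]
        _ = ∑ i, a (Pi i u) (wi i) := by
            refine Finset.sum_congr rfl fun i _ => ?_
            rw [hPi_proj i u (wi i) (hwi_mem i)]
    have hstep : a u v ≤ ∑ i, Real.sqrt (a (Pi i u) (Pi i u)) * Real.sqrt (a (wi i) (wi i)) := by
      rw [hS]
      exact Finset.sum_le_sum fun i _ => hcs _ _
    have hsum_cs : (∑ i, Real.sqrt (a (Pi i u) (Pi i u)) * Real.sqrt (a (wi i) (wi i))) ^ 2 ≤
        (∑ i, a (Pi i u) (Pi i u)) * (∑ i, a (wi i) (wi i)) := by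
      calc (∑ i, Real.sqrt (a (Pi i u) (Pi i u)) * Real.sqrt (a (wi i) (wi i))) ^ 2
          ≤ (∑ i, Real.sqrt (a (Pi i u) (Pi i u)) ^ 2) * (∑ i, Real.sqrt (a (wi i) (wi i)) ^ 2) := by
            exact Finset.sum_mul_sq_le_sq_mul_sq Finset.univ _ _
        _ = (∑ i, a (Pi i u) (Pi i u)) * (∑ i, a (wi i) (wi i)) := by
            congr 1 <;> exact Finset.sum_congr rfl fun i _ => Real.sq_sqrt (hnn _)
    have hTnn : 0 ≤ ∑ i, a (wi i) (wi i) := Finset.sum_nonneg fun i _ => hnn _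
    have hsq : (a u v) ^ 2 ≤ (a u v) * (∑ i, a (wi i) (wi i)) := by
      calc (a u v) ^ 2 ≤ (∑ i, Real.sqrt (a (Pi i u) (Pi i u)) * Real.sqrt (a (wi i) (wi i))) ^ 2 :=
            pow_le_pow_left₀ hSnn hstep 2
        _ ≤ (∑ i, a (Pi i u) (Pi i u)) * (∑ i, a (wi i) (wi i)) := hsum_cs
        _ = (a u v) * (∑ i, a (wi i) (wi i)) := by rw [← hkey]
    rcases eq_or_lt_of_le hSnn with h0 | h0
    · rw [← h0]; exact hTnn
    · nlinarith
end

section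
/- Let V be a finite-dimensional real inner product space with symmetric positive definite form a, and subspaces V₀,...,V_N with V = Σᵢ Vᵢ. Define n as the maximum over i of the number of indices j such that a does not vanish identically on Vᵢ × V_j. Then for any vᵢ ∈ Vᵢ, a(Σᵢ vᵢ, Σᵢ vᵢ) ≤ n Σᵢ a(vᵢ, vᵢ). -/
theorem stmt15 {V : Type*} [AddCommGroup V] [Module ℝ V] [FiniteDimensional ℝ V]
    (a : V →ₗ[ℝ] V →ₗ[ℝ] ℝ)
    (hsymm : ∀ u v, a u v = a v u)
    (hpos : ∀ v : V, v ≠ 0 → 0 < a v v)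
    (N : ℕ) (Vs : Fin (N + 1) → Submodule ℝ V)
    (hspan : (⨆ i, Vs i) = ⊤)
    (n : ℕ)
    -- n bounds the maximal degree (with self-loop) in the interaction graph
    (hn : ∀ i : Fin (N + 1),
      Set.ncard {j : Fin (N + 1) | ∃ u ∈ Vs i, ∃ w ∈ Vs j, a u w ≠ 0} ≤ n) :
    ∀ vi : Fin (N + 1) → V, (∀ i, vi i ∈ Vs i) →
      a (∑ i, vi i) (∑ i, vi i) ≤ (n : ℝ) * ∑ i, a (vi i) (vi i) := by
  intro vi hvi
  classical
  set P : Fin (N + 1) → Fin (N + 1) → Prop :=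
    fun i j => ∃ u ∈ Vs i, ∃ w ∈ Vs j, a u w ≠ 0 with hP
  have hPsymm : ∀ i j, P i j ↔ P j i := by
    intro i j
    constructor <;> rintro ⟨u, hu, w, hw, h⟩ <;>
      exact ⟨w, hw, u, hu, by rwa [hsymm]⟩
  have hnonneg : ∀ v, 0 ≤ a v v := by
    intro v
    by_cases hv : v = 0
    · simp [hv]
    · exact (hpos v hv).le
  have key : ∀ i j, a (vi i) (vi j) ≤
      if P i j then (a (vi i) (vi i) + a (vi j) (vi j)) / 2 else 0 := by
    intro i j
    by_cases h : P i j
    · rw [if_pos h]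
      have h0 := hnonneg (vi i - vi j)
      have hexp : a (vi i - vi j) (vi i - vi j)
          = a (vi i) (vi i) - 2 * a (vi i) (vi j) + a (vi j) (vi j) := by
        simp only [map_sub, LinearMap.sub_apply]
        rw [hsymm (vi j) (vi i)]; ring
      rw [hexp] at h0
      linarith
    · rw [if_neg h]
      simp only [hP] at h
      push_neg at h
      exact le_of_eq (h (vi i) (hvi i) (vi j) (hvi j))
  have expand : a (∑ i, vi i) (∑ i, vi i) = ∑ i, ∑ j, a (vi i) (vi j) := by
    simp only [map_sum, LinearMap.sum_apply]
    exact Finset.sum_comm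
  have hcard : ∀ i, ((Finset.univ.filter (fun j => P i j)).card : ℝ) ≤ n := by
    intro i
    have := hn i
    rw [Set.ncard_eq_toFinset_card', Set.toFinset_setOf] at this
    exact_mod_cast this
  calc a (∑ i, vi i) (∑ i, vi i) = ∑ i, ∑ j, a (vi i) (vi j) := expand
    _ ≤ ∑ i, ∑ j, (if P i j then (a (vi i) (vi i) + a (vi j) (vi j)) / 2 else 0) :=
        Finset.sum_le_sum fun i _ => Finset.sum_le_sum fun j _ => key i j
    _ = (∑ i, ∑ j, (if P i j then a (vi i) (vi i) / 2 else 0))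
        + ∑ i, ∑ j, (if P i j then a (vi j) (vi j) / 2 else 0) := by
        rw [← Finset.sum_add_distrib]
        refine Finset.sum_congr rfl fun i _ => ?_
        rw [← Finset.sum_add_distrib]
        refine Finset.sum_congr rfl fun j _ => ?_
        by_cases h : P i j <;> simp [h] <;> ring
    _ = (∑ i, ∑ j, (if P i j then a (vi i) (vi i) / 2 else 0))
        + ∑ j, ∑ i, (if P j i then a (vi j) (vi j) / 2 else 0) := by
        congr 1
        rw [Finset.sum_comm]
        refine Finset.sum_congr rfl fun j _ => Finset.sum_congr rfl fun i _ => ?_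
        simp only [hPsymm i j]
    _ = ∑ i, ((Finset.univ.filter (fun j => P i j)).card : ℝ) * a (vi i) (vi i) := by
        rw [← Finset.sum_add_distrib]
        refine Finset.sum_congr rfl fun i _ => ?_
        rw [← Finset.sum_filter, Finset.sum_const]
        simp [nsmul_eq_mul]; ring
    _ ≤ ∑ i, (n : ℝ) * a (vi i) (vi i) :=
        Finset.sum_le_sum fun i _ =>
          mul_le_mul_of_nonneg_right (hcard i) (hnonneg (vi i))
    _ = (n : ℝ) * ∑ i, a (vi i) (vi i) := by rw [Finset.mul_sum]
end
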